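/- Let p ≥ 1, W̃ ∈ ℝ^{p×p} with |w̃_{jk}| ≤ 1 for all j, k, and let s ≥ 1 + max(‖W̃‖₁, ‖W̃‖_∞). Define H(W) := 2((sI − W∘W)^{-1})^T ∘ W. Then for all W₁, W₂ ∈ ℝ^{p×p} with |entries of W_i| ≤ |corresponding entries of W̃| (i = 1, 2), it holds that ‖H(W₁) − H(W₂)‖_F ≤ (2√p + 4p‖W̃‖_F)·‖W₁ − W₂‖_F. -/

import Mathlib

/-!
Write `A(W) = s • 1 - W ⊙ W`. On the box `|W| ≤ |Wt|`, the matrix `W ⊙ W` is entrywise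
nonnegative with row and column sums at most `s - 1`, so the Neumann series for
`(1 - W ⊙ W / s)⁻¹` shows that `A(W)⁻¹` is entrywise nonnegative, and since the row and
column sums of `A(W)` are at least `1`, those of `A(W)⁻¹` are at most `1`. Now
`H W₁ - H W₂ = 2 • ((A₁⁻¹)ᵀ ⊙ (W₁ - W₂) + (A₁⁻¹ - A₂⁻¹)ᵀ ⊙ W₂)`: the entries of `A₁⁻¹` are at
most `1`, and by the resolvent identity `A₁⁻¹ - A₂⁻¹ = A₁⁻¹ (A₂ - A₁) A₂⁻¹` the entries of
`A₁⁻¹ - A₂⁻¹` are bounded by those of `A₂ - A₁ = (W₁ + W₂) ⊙ (W₁ - W₂)`, hence by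
`2 ‖W₁ - W₂‖_F`.
-/

open Matrix

noncomputable def frobNorm {p : ℕ} (W : Matrix (Fin p) (Fin p) ℝ) : ℝ :=
  Real.sqrt (∑ j, ∑ k, (W j k) ^ 2)

noncomputable def colSumNorm {p : ℕ} (W : Matrix (Fin p) (Fin p) ℝ) : ℝ :=
  ⨆ k, ∑ j, |W j k|

noncomputable def rowSumNorm {p : ℕ} (W : Matrix (Fin p) (Fin p) ℝ) : ℝ :=
  ⨆ j, ∑ k, |W j k|

noncomputable def gradG {p : ℕ} (μ s : ℝ) (Wt W : Matrix (Fin p) (Fin p) ℝ) :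
    Matrix (Fin p) (Fin p) ℝ :=
  (μ / 2) • (W - Wt) +
    (2 : ℝ) • Matrix.hadamard ((s • (1 : Matrix (Fin p) (Fin p) ℝ) - Matrix.hadamard W W)⁻¹)ᵀ W

noncomputable def fObj {p : ℕ} (μ s : ℝ) (Wt W : Matrix (Fin p) (Fin p) ℝ) : ℝ :=
  μ / 2 * frobNorm (Wt - W) ^ 2 +
    (-Real.log ((s • (1 : Matrix (Fin p) (Fin p) ℝ) - Matrix.hadamard W W).det) +
      p * Real.log s)

noncomputable def specRad {p : ℕ} (M : Matrix (Fin p) (Fin p) ℝ) : ENNReal :=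
  spectralRadius ℂ (M.map (algebraMap ℝ ℂ))

noncomputable def specNorm {p : ℕ} (M : Matrix (Fin p) (Fin p) ℝ) : ℝ :=
  ‖LinearMap.toContinuousLinearMap (Matrix.toEuclideanLin M)‖

section Substochastic

variable {n : Type*} [Fintype n]

structure IsDoublySubstochastic (X : Matrix n n ℝ) : Prop where
  nonneg : ∀ i j, 0 ≤ X i j
  sum_row_le_one : ∀ i, ∑ j, X i j ≤ 1
  sum_col_le_one : ∀ j, ∑ i, X i j ≤ 1

lemma abs_sum_mul_le {w x : n → ℝ} {c : ℝ} (hw : ∀ a, 0 ≤ w a) (hw1 : ∑ a, w a ≤ 1)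
    (hx : ∀ a, |x a| ≤ c) (hc : 0 ≤ c) : |∑ a, w a * x a| ≤ c :=
  calc |∑ a, w a * x a| ≤ ∑ a, w a * c := by
        refine (Finset.abs_sum_le_sum_abs _ _).trans (Finset.sum_le_sum fun a _ => ?_)
        rw [abs_mul, abs_of_nonneg (hw a)]
        exact mul_le_mul_of_nonneg_left (hx a) (hw a)
    _ = (∑ a, w a) * c := (Finset.sum_mul _ _ _).symm
    _ ≤ c := mul_le_of_le_one_left hc hw1

namespace IsDoublySubstochastic

lemma abs_apply_le_one {X : Matrix n n ℝ} (hX : IsDoublySubstochastic X) (i j : n) :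
    |X i j| ≤ 1 := by
  rw [abs_of_nonneg (hX.nonneg i j)]
  exact (Finset.single_le_sum (fun k _ => hX.nonneg i k) (Finset.mem_univ j)).trans
    (hX.sum_row_le_one i)

lemma abs_mul_mul_apply_le {X Y B : Matrix n n ℝ} {c : ℝ} (hX : IsDoublySubstochastic X)
    (hY : IsDoublySubstochastic Y) (hB : ∀ a b, |B a b| ≤ c) (hc : 0 ≤ c) (i j : n) :
    |(X * B * Y) i j| ≤ c := by
  have hXB : ∀ b, |(X * B) i b| ≤ c := fun b =>
    abs_sum_mul_le (hX.nonneg i) (hX.sum_row_le_one i) (fun a => hB a b) hc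
  rw [mul_apply]
  simp_rw [mul_comm ((X * B) i _)]
  exact abs_sum_mul_le (fun b => hY.nonneg b j) (hY.sum_col_le_one j) hXB hc

end IsDoublySubstochastic

variable [DecidableEq n]

lemma sum_row_inv_le_one {A : Matrix n n ℝ} (hA : IsUnit A.det) (hinv : ∀ i j, 0 ≤ A⁻¹ i j)
    (hrow : ∀ i, 1 ≤ ∑ j, A i j) (i : n) : ∑ j, A⁻¹ i j ≤ 1 :=
  calc ∑ j, A⁻¹ i j ≤ ∑ a, A⁻¹ i a * ∑ j, A a j :=
        Finset.sum_le_sum fun a _ => le_mul_of_one_le_right (hinv i a) (hrow a)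
    _ = ∑ j, (A⁻¹ * A) i j := by simp_rw [mul_apply, Finset.mul_sum]; exact Finset.sum_comm
    _ = 1 := by simp [nonsing_inv_mul A hA, one_apply]

lemma sum_col_inv_le_one {A : Matrix n n ℝ} (hA : IsUnit A.det) (hinv : ∀ i j, 0 ≤ A⁻¹ i j)
    (hcol : ∀ j, 1 ≤ ∑ i, A i j) (j : n) : ∑ i, A⁻¹ i j ≤ 1 := by
  have := sum_row_inv_le_one (A := Aᵀ) (by rwa [det_transpose])
    (fun i j => by rw [← transpose_nonsing_inv]; exact hinv j i) hcol j
  simpa [← transpose_nonsing_inv] using this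

end Substochastic

section NonnegInverse

variable {n : Type*} [Fintype n] [DecidableEq n]

attribute [local instance] Matrix.linftyOpNormedRing Matrix.linftyOpNormedAlgebra

lemma linfty_opNorm_lt_one {T : Matrix n n ℝ} (hT : ∀ i j, 0 ≤ T i j)
    (hrow : ∀ i, ∑ j, T i j < 1) : ‖T‖ < 1 := by
  rw [linfty_opNorm_def, ← NNReal.coe_one, NNReal.coe_lt_coe,
    Finset.sup_lt_iff zero_lt_one]
  intro i _
  rw [← NNReal.coe_lt_coe, NNReal.coe_sum, NNReal.coe_one]
  simpa only [coe_nnnorm, Real.norm_of_nonneg (hT i _)] using hrow i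

lemma isUnit_one_sub_and_inv_nonneg {T : Matrix n n ℝ} (hT : ∀ i j, 0 ≤ T i j)
    (hrow : ∀ i, ∑ j, T i j < 1) :
    IsUnit (1 - T) ∧ ∀ i j, 0 ≤ (1 - T)⁻¹ i j := by
  have hnorm := linfty_opNorm_lt_one hT hrow
  refine ⟨isUnit_one_sub_of_norm_lt_one hnorm, fun i j => ?_⟩
  have hsum := Pi.hasSum.mp (Pi.hasSum.mp (hasSum_geom_series_inverse T hnorm) i) j
  rw [nonsing_inv_eq_ringInverse]
  exact hsum.nonneg fun m => pow_apply_nonneg hT m i j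

lemma isUnit_det_and_isDoublySubstochastic_inv {M : Matrix n n ℝ} {s : ℝ} (hs : 0 < s)
    (hM : ∀ i j, 0 ≤ M i j) (hrow : ∀ i, ∑ j, M i j ≤ s - 1)
    (hcol : ∀ j, ∑ i, M i j ≤ s - 1) :
    IsUnit (s • (1 : Matrix n n ℝ) - M).det ∧
      IsDoublySubstochastic (s • (1 : Matrix n n ℝ) - M)⁻¹ := by
  set T := s⁻¹ • M
  have hT : ∀ i j, 0 ≤ T i j := fun i j => mul_nonneg (inv_nonneg.2 hs.le) (hM i j)
  have hTrow : ∀ i, ∑ j, T i j < 1 := fun i => by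
    simp only [T, Matrix.smul_apply, smul_eq_mul, ← Finset.mul_sum]
    rw [inv_mul_lt_iff₀ hs]
    linarith [hrow i]
  obtain ⟨hunit, hinv⟩ := isUnit_one_sub_and_inv_nonneg hT hTrow
  have hA : s • (1 : Matrix n n ℝ) - M = s • (1 - T) := by
    rw [smul_sub, smul_smul, mul_inv_cancel₀ hs.ne', one_smul]
  have hunit' := (isUnit_iff_isUnit_det _).mp hunit
  have hdet : IsUnit (s • (1 : Matrix n n ℝ) - M).det := by
    rw [hA, det_smul]
    exact (hs.ne'.isUnit.pow _).mul hunit'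
  have hnonneg : ∀ i j, 0 ≤ (s • (1 : Matrix n n ℝ) - M)⁻¹ i j := fun i j => by
    have := invertibleOfNonzero hs.ne'
    rw [hA, inv_smul _ _ hunit', invOf_eq_inv, Matrix.smul_apply, smul_eq_mul]
    exact mul_nonneg (inv_nonneg.2 hs.le) (hinv i j)
  have hsum_row : ∀ i, ∑ j, (s • (1 : Matrix n n ℝ) - M) i j = s - ∑ j, M i j := fun i => by
    simp [Finset.sum_sub_distrib, one_apply]
  have hsum_col : ∀ j, ∑ i, (s • (1 : Matrix n n ℝ) - M) i j = s - ∑ i, M i j := fun j => by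
    simp [Finset.sum_sub_distrib, one_apply]
  refine ⟨hdet, hnonneg, sum_row_inv_le_one hdet hnonneg fun i => ?_,
    sum_col_inv_le_one hdet hnonneg fun j => ?_⟩
  · rw [hsum_row]; linarith [hrow i]
  · rw [hsum_col]; linarith [hcol j]

lemma abs_inv_sub_inv_apply_le {A B : Matrix n n ℝ} {c : ℝ} (hA : IsUnit A.det)
    (hB : IsUnit B.det) (hA' : IsDoublySubstochastic A⁻¹) (hB' : IsDoublySubstochastic B⁻¹)
    (hBA : ∀ i j, |(B - A) i j| ≤ c) (hc : 0 ≤ c) (i j : n) :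
    |(A⁻¹ - B⁻¹) i j| ≤ c := by
  rw [inv_sub_inv (iff_of_true ((isUnit_iff_isUnit_det _).2 hA) ((isUnit_iff_isUnit_det _).2 hB))]
  exact hA'.abs_mul_mul_apply_le hB' hBA hc i j

end NonnegInverse

lemma hadamard_sub_hadamard {m n α : Type*} [NonUnitalNonAssocRing α] (X Y U V : Matrix m n α) :
    X ⊙ U - Y ⊙ V = X ⊙ (U - V) + (X - Y) ⊙ V := by
  ext i j
  simp only [Matrix.sub_apply, Matrix.add_apply, hadamard_apply, mul_sub, sub_mul]
  abel

section Frobenius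

variable {p : ℕ}

attribute [local instance] Matrix.frobeniusNormedAddCommGroup Matrix.frobeniusNormedSpace

lemma frobNorm_eq_norm (W : Matrix (Fin p) (Fin p) ℝ) : frobNorm W = ‖W‖ := by
  simp only [frobNorm, frobenius_norm_def, Real.sqrt_eq_rpow, Real.norm_eq_abs,
    Real.rpow_two, sq_abs, one_div]

lemma frobNorm_nonneg (W : Matrix (Fin p) (Fin p) ℝ) : 0 ≤ frobNorm W :=
  Real.sqrt_nonneg _

lemma frobNorm_add_le (U V : Matrix (Fin p) (Fin p) ℝ) :
    frobNorm (U + V) ≤ frobNorm U + frobNorm V := by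
  simpa only [frobNorm_eq_norm] using norm_add_le U V

lemma frobNorm_smul (c : ℝ) (W : Matrix (Fin p) (Fin p) ℝ) :
    frobNorm (c • W) = |c| * frobNorm W := by
  simp only [frobNorm_eq_norm, norm_smul, Real.norm_eq_abs]

lemma abs_apply_le_frobNorm (W : Matrix (Fin p) (Fin p) ℝ) (j k : Fin p) :
    |W j k| ≤ frobNorm W := by
  rw [← Real.sqrt_sq_eq_abs]
  refine Real.sqrt_le_sqrt ?_
  calc W j k ^ 2 ≤ ∑ k', W j k' ^ 2 :=
        Finset.single_le_sum (fun k' _ => sq_nonneg (W j k')) (Finset.mem_univ k)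
    _ ≤ ∑ j', ∑ k', W j' k' ^ 2 :=
        Finset.single_le_sum (fun j' _ => Finset.sum_nonneg fun k' _ => sq_nonneg (W j' k'))
          (Finset.mem_univ j)

lemma abs_hadamard_self_sub_hadamard_self_apply_le {U V : Matrix (Fin p) (Fin p) ℝ}
    (hU : ∀ j k, |U j k| ≤ 1) (hV : ∀ j k, |V j k| ≤ 1) (j k : Fin p) :
    |(U ⊙ U - V ⊙ V) j k| ≤ 2 * frobNorm (U - V) := by
  have hsum : |U j k + V j k| ≤ 2 := by linarith [abs_add_le (U j k) (V j k), hU j k, hV j k]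
  have hfactor : (U ⊙ U - V ⊙ V) j k = (U j k + V j k) * (U - V) j k := by
    simp only [Matrix.sub_apply, hadamard_apply]
    ring
  rw [hfactor, abs_mul]
  exact mul_le_mul hsum (abs_apply_le_frobNorm _ j k) (abs_nonneg _) zero_le_two

lemma frobNorm_le_of_abs_le {U V : Matrix (Fin p) (Fin p) ℝ} (h : ∀ j k, |U j k| ≤ |V j k|) :
    frobNorm U ≤ frobNorm V := by
  refine Real.sqrt_le_sqrt (Finset.sum_le_sum fun j _ => Finset.sum_le_sum fun k _ => ?_)
  simpa only [sq_abs] using pow_le_pow_left₀ (abs_nonneg _) (h j k) 2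

lemma frobNorm_hadamard_le {X Y : Matrix (Fin p) (Fin p) ℝ} {c : ℝ} (hc : 0 ≤ c)
    (hX : ∀ j k, |X j k| ≤ c) : frobNorm (X ⊙ Y) ≤ c * frobNorm Y := by
  calc frobNorm (X ⊙ Y) ≤ frobNorm (c • Y) := frobNorm_le_of_abs_le fun j k => by
        rw [hadamard_apply, Matrix.smul_apply, smul_eq_mul, abs_mul, abs_mul, abs_of_nonneg hc]
        exact mul_le_mul_of_nonneg_right (hX j k) (abs_nonneg _)
    _ = c * frobNorm Y := by rw [frobNorm_smul, abs_of_nonneg hc]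

end Frobenius

lemma mul_self_le_abs_of_abs_le {a b : ℝ} (hb : |b| ≤ 1) (hab : |a| ≤ |b|) : a * a ≤ |b| := by
  nlinarith [abs_mul_abs_self a, abs_nonneg a]

section SumNorms

variable {p : ℕ}

lemma sum_abs_le_rowSumNorm (W : Matrix (Fin p) (Fin p) ℝ) (j : Fin p) :
    ∑ k, |W j k| ≤ rowSumNorm W :=
  le_ciSup (f := fun j => ∑ k, |W j k|) (Set.finite_range _).bddAbove j

lemma sum_abs_le_colSumNorm (W : Matrix (Fin p) (Fin p) ℝ) (k : Fin p) :
    ∑ j, |W j k| ≤ colSumNorm W :=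
  le_ciSup (f := fun k => ∑ j, |W j k|) (Set.finite_range _).bddAbove k

lemma rowSumNorm_nonneg (W : Matrix (Fin p) (Fin p) ℝ) : 0 ≤ rowSumNorm W :=
  Real.iSup_nonneg fun _ => Finset.sum_nonneg fun _ _ => abs_nonneg _

lemma isUnit_det_and_isDoublySubstochastic_inv_of_abs_le {Wt W : Matrix (Fin p) (Fin p) ℝ}
    {s : ℝ} (hWt : ∀ j k, |Wt j k| ≤ 1) (hs : 1 + max (colSumNorm Wt) (rowSumNorm Wt) ≤ s)
    (hW : ∀ j k, |W j k| ≤ |Wt j k|) :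
    IsUnit (s • (1 : Matrix (Fin p) (Fin p) ℝ) - W ⊙ W).det ∧
      IsDoublySubstochastic (s • (1 : Matrix (Fin p) (Fin p) ℝ) - W ⊙ W)⁻¹ := by
  have hsq : ∀ j k, (W ⊙ W) j k ≤ |Wt j k| := fun j k =>
    mul_self_le_abs_of_abs_le (hWt j k) (hW j k)
  have hcol := le_max_left (colSumNorm Wt) (rowSumNorm Wt)
  have hrow := le_max_right (colSumNorm Wt) (rowSumNorm Wt)
  refine isUnit_det_and_isDoublySubstochastic_inv ?_ (fun j k => mul_self_nonneg (W j k))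
    (fun j => ?_) (fun k => ?_)
  · linarith [rowSumNorm_nonneg Wt]
  · linarith [Finset.sum_le_sum fun k (_ : k ∈ Finset.univ) => hsq j k,
      sum_abs_le_rowSumNorm Wt j]
  · linarith [Finset.sum_le_sum fun j (_ : j ∈ Finset.univ) => hsq j k,
      sum_abs_le_colSumNorm Wt k]

end SumNorms

/-- Lipschitz bound for the gradient H of the DAGMA acyclicity
function over the box. -/
theorem stmt13 {p : ℕ} (hp : 1 ≤ p) (Wt : Matrix (Fin p) (Fin p) ℝ)
    (hWt : ∀ j k, |Wt j k| ≤ 1) (s : ℝ)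
    (hs : 1 + max (colSumNorm Wt) (rowSumNorm Wt) ≤ s)
    (H : Matrix (Fin p) (Fin p) ℝ → Matrix (Fin p) (Fin p) ℝ)
    (hH : ∀ W : Matrix (Fin p) (Fin p) ℝ,
      H W = (2 : ℝ) • Matrix.hadamard
        ((s • (1 : Matrix (Fin p) (Fin p) ℝ) - Matrix.hadamard W W)⁻¹)ᵀ W) :
    ∀ W₁ W₂ : Matrix (Fin p) (Fin p) ℝ,
      (∀ j k, |W₁ j k| ≤ |Wt j k|) → (∀ j k, |W₂ j k| ≤ |Wt j k|) →
      frobNorm (H W₁ - H W₂) ≤ (2 * Real.sqrt p + 4 * p * frobNorm Wt) * frobNorm (W₁ - W₂) := by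
  intro W₁ W₂ h₁ h₂
  obtain ⟨hdet₁, hX₁⟩ := isUnit_det_and_isDoublySubstochastic_inv_of_abs_le hWt hs h₁
  obtain ⟨hdet₂, hX₂⟩ := isUnit_det_and_isDoublySubstochastic_inv_of_abs_le hWt hs h₂
  set A₁ := s • (1 : Matrix (Fin p) (Fin p) ℝ) - W₁ ⊙ W₁
  set A₂ := s • (1 : Matrix (Fin p) (Fin p) ℝ) - W₂ ⊙ W₂
  set δ := frobNorm (W₁ - W₂)
  have hδ : 0 ≤ δ := frobNorm_nonneg _
  have hA : ∀ a b, |(A₂ - A₁) a b| ≤ 2 * δ := by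
    simpa only [A₁, A₂, sub_sub_sub_cancel_left] using abs_hadamard_self_sub_hadamard_self_apply_le
      (fun j k => (h₁ j k).trans (hWt j k)) (fun j k => (h₂ j k).trans (hWt j k))
  have hinv := abs_inv_sub_inv_apply_le hdet₁ hdet₂ hX₁ hX₂ hA (by positivity)
  have hsplit : H W₁ - H W₂ = (2 : ℝ) • ((A₁⁻¹)ᵀ ⊙ (W₁ - W₂) + (A₁⁻¹ - A₂⁻¹)ᵀ ⊙ W₂) := by
    rw [hH, hH, ← smul_sub, hadamard_sub_hadamard, transpose_sub]
  have hsqrt : 1 ≤ Real.sqrt p := Real.one_le_sqrt.2 (by exact_mod_cast hp)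
  have hp' : (1 : ℝ) ≤ p := by exact_mod_cast hp
  calc frobNorm (H W₁ - H W₂) ≤ 2 * (1 * δ + 2 * δ * frobNorm Wt) := by
        rw [hsplit, frobNorm_smul, abs_two]
        gcongr
        refine (frobNorm_add_le _ _).trans (add_le_add ?_ ?_)
        · exact frobNorm_hadamard_le zero_le_one fun j k => hX₁.abs_apply_le_one k j
        · exact (frobNorm_hadamard_le (by positivity) fun j k => hinv k j).trans
            (mul_le_mul_of_nonneg_left (frobNorm_le_of_abs_le h₂) (by positivity))
    _ ≤ (2 * Real.sqrt p + 4 * p * frobNorm Wt) * δ := by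
        nlinarith [mul_nonneg (sub_nonneg.2 hsqrt) hδ,
          mul_nonneg (mul_nonneg (sub_nonneg.2 hp') (frobNorm_nonneg Wt)) hδ]
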